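/- Let A_n = [[a_n, 0],[c_n, d_n]] be 2×2 lower-triangular matrices with |a_i| ≥ √2 for all i. Then the product A_{n-1}⋯A_1A_0 applied to any vector (u,v) in the cone {|u| ≥ α|v|} has Euclidean norm at least (√2)^n/√(1+1/α²) times ‖(u,v)‖. -/
import Mathlib


theorem stmt10 (α : ℝ) (hα : 0 < α) (n : ℕ) (A : ℕ → Matrix (Fin 2) (Fin 2) ℝ)
    (hzero : ∀ i, A i 0 1 = 0) (ha : ∀ i, Real.sqrt 2 ≤ |A i 0 0|)
    (u v : ℝ) (hcone : α * |v| ≤ |u|)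
    (w : ℕ → Fin 2 → ℝ) (hw0 : w 0 = ![u, v])
    (hwS : ∀ k, w (k + 1) = (A k).mulVec (w k)) :
    (Real.sqrt 2 ^ n / Real.sqrt (1 + 1 / α ^ 2)) * Real.sqrt (u ^ 2 + v ^ 2) ≤
      Real.sqrt ((w n 0) ^ 2 + (w n 1) ^ 2) := by
  have h2 : (0:ℝ) ≤ Real.sqrt 2 := Real.sqrt_nonneg 2
  -- first coordinate grows
  have key : ∀ m, Real.sqrt 2 ^ m * |u| ≤ |w m 0| := by
    intro m
    induction m with
    | zero => simp [hw0]
    | succ k ih =>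
      have hrec : w (k + 1) 0 = A k 0 0 * w k 0 := by
        rw [hwS k]
        simp [Matrix.mulVec, dotProduct, Fin.sum_univ_two, hzero k]
      rw [hrec, abs_mul, pow_succ]
      calc Real.sqrt 2 ^ k * Real.sqrt 2 * |u|
          = Real.sqrt 2 * (Real.sqrt 2 ^ k * |u|) := by ring
        _ ≤ |A k 0 0| * |w k 0| := by
            apply mul_le_mul (ha k) ih (by positivity) (abs_nonneg _)
  have hα2 : (0:ℝ) < 1 + 1 / α ^ 2 := by positivity
  have hsq : Real.sqrt (u ^ 2 + v ^ 2) ≤ Real.sqrt (1 + 1 / α ^ 2) * |u| := by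
    have hv : |v| ≤ |u| / α := by
      rw [le_div_iff₀ hα]; linarith [hcone]
    have hv2 : α ^ 2 * v ^ 2 ≤ u ^ 2 := by
      nlinarith [mul_self_le_mul_self (by positivity : (0:ℝ) ≤ α * |v|) hcone,
        sq_abs u, sq_abs v]
    have h3 : v ^ 2 ≤ 1 / α ^ 2 * u ^ 2 := by
      rw [div_mul_eq_mul_div, le_div_iff₀ (by positivity)]
      nlinarith [hv2]
    calc Real.sqrt (u ^ 2 + v ^ 2) ≤ Real.sqrt ((1 + 1 / α ^ 2) * u ^ 2) := by
          apply Real.sqrt_le_sqrt; nlinarith [h3]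
      _ = Real.sqrt (1 + 1 / α ^ 2) * |u| := by
          rw [Real.sqrt_mul hα2.le, Real.sqrt_sq_eq_abs]
  calc Real.sqrt 2 ^ n / Real.sqrt (1 + 1 / α ^ 2) * Real.sqrt (u ^ 2 + v ^ 2)
      ≤ Real.sqrt 2 ^ n / Real.sqrt (1 + 1 / α ^ 2) * (Real.sqrt (1 + 1 / α ^ 2) * |u|) := by
        apply mul_le_mul_of_nonneg_left hsq (by positivity)
    _ = Real.sqrt 2 ^ n * |u| := by
        field_simp
    _ ≤ |w n 0| := key n
    _ ≤ Real.sqrt ((w n 0) ^ 2 + (w n 1) ^ 2) := by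
        rw [← Real.sqrt_sq_eq_abs]
        apply Real.sqrt_le_sqrt; nlinarith [sq_nonneg (w n 1)]
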